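/- Let T > 0, p ≥ 1, let (Ω, F, μ) be a finite measure space, and let η : Δ × Ω → ℝ be measurable on the triangle Δ = {(t,s) : 0 ≤ t ≤ s ≤ T}. Suppose (i) for each t, ∫_Ω (∫_t^T |η(t,s,ω)|² ds)^{p/2} dμ < ∞, and (ii) η is uniformly H^p-continuous in t: lim_{n→∞} sup_{|t'-t| ≤ 1/n} ∫_Ω ( ∫_{t∨t'}^T |η(t',s) - η(t,s)|² ds )^{p/2} dμ = 0. Then for every ε > 0 there exists a partition 0 = t_0 < ··· < t_n = T such that the piecewise-frozen process η_n(t,s) = Σ_i η(t_i, s)·1_{[t_i, t_{i+1})}(t) satisfies ∫_Ω ∫_0^T ( ∫_t^T |η_n(t,s) - η(t,s)|² ds )^{p/2} dt dμ < ε. -/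

import Mathlib

open MeasureTheory Filter

set_option maxHeartbeats 1000000

theorem frozen_time_approximation
    {Ω : Type*} [MeasurableSpace Ω] (μ : Measure Ω) [IsFiniteMeasure μ]
    (T p : ℝ) (hT : 0 < T) (hp : 1 ≤ p)
    (η : ℝ → ℝ → Ω → ℝ)
    (hmeas : Measurable (fun q : ℝ × ℝ × Ω => η q.1 q.2.1 q.2.2))
    (hfin : ∀ t ∈ Set.Icc (0:ℝ) T,
      ∫⁻ ω, (∫⁻ s in Set.Icc t T, ENNReal.ofReal ((η t s ω) ^ 2)) ^ (p / 2) ∂μ < ⊤)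
    (hucont : Tendsto (fun n : ℕ =>
        ⨆ t ∈ Set.Icc (0:ℝ) T, ⨆ t' ∈ Set.Icc (0:ℝ) T, ⨆ _ : |t' - t| ≤ 1 / (n : ℝ),
          ∫⁻ ω, (∫⁻ s in Set.Icc (max t t') T,
              ENNReal.ofReal ((η t' s ω - η t s ω) ^ 2)) ^ (p / 2) ∂μ)
      atTop (nhds 0)) :
    ∀ ε : ENNReal, 0 < ε →
      ∃ (n : ℕ) (tp : ℕ → ℝ), 0 < n ∧ tp 0 = 0 ∧ tp n = T ∧
        (∀ i < n, tp i < tp (i + 1)) ∧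
        ∫⁻ ω, (∫⁻ t in Set.Icc (0:ℝ) T,
            (∫⁻ s in Set.Icc t T, ENNReal.ofReal
              (((∑ i ∈ Finset.range n,
                  Set.indicator (Set.Ico (tp i) (tp (i + 1)))
                    (fun _ => η (tp i) s ω) t) - η t s ω) ^ 2)) ^ (p / 2)) ∂μ < ε := by
  intro ε hε
  -- the sup quantity
  set S : ℕ → ENNReal := fun n : ℕ =>
      ⨆ t ∈ Set.Icc (0:ℝ) T, ⨆ t' ∈ Set.Icc (0:ℝ) T, ⨆ _ : |t' - t| ≤ 1 / (n : ℝ),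
        ∫⁻ ω, (∫⁻ s in Set.Icc (max t t') T,
            ENNReal.ofReal ((η t' s ω - η t s ω) ^ 2)) ^ (p / 2) ∂μ with hS
  set δ : ENNReal := ε / (ENNReal.ofReal T + 1) with hδdef
  have hTtop : ENNReal.ofReal T + 1 ≠ ⊤ := by simp
  have hT0 : ENNReal.ofReal T + 1 ≠ 0 := by simp
  have hδ : 0 < δ := ENNReal.div_pos hε.ne' hTtop
  obtain ⟨m, hm1, hmδ⟩ : ∃ m : ℕ, 1 ≤ m ∧ S m < δ := by
    have h1 := hucont.eventually_lt_const hδ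
    have h2 : ∀ᶠ m : ℕ in atTop, 1 ≤ m := eventually_ge_atTop 1
    obtain ⟨m, hm2, hm1⟩ := (h1.and h2).exists
    exact ⟨m, hm1, hm2⟩
  have hmpos : (0:ℝ) < m := by exact_mod_cast hm1
  -- choose the partition
  set n : ℕ := max 1 ⌈T * m⌉₊ with hn
  have hn1 : 1 ≤ n := le_max_left _ _
  have hnpos : (0:ℝ) < n := by exact_mod_cast hn1
  have hTmn : T * m ≤ n := le_trans (Nat.le_ceil _) (by exact_mod_cast le_max_right 1 ⌈T * m⌉₊)
  set tp : ℕ → ℝ := fun i => i * T / n with htp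
  have htp0 : tp 0 = 0 := by simp [htp]
  have htpn : tp n = T := by simp only [htp]; exact mul_div_cancel_left₀ T hnpos.ne'
  have htplt : ∀ i, tp i < tp (i + 1) := by
    intro i
    have : (i : ℝ) * T < (i + 1 : ℕ) * T := by
      have : (i : ℝ) < (i + 1 : ℕ) := by exact_mod_cast Nat.lt_succ_self i
      nlinarith
    exact div_lt_div_of_pos_right this hnpos
  have htpmono : StrictMono tp := strictMono_nat_of_lt_succ htplt
  have htpnonneg : ∀ i, 0 ≤ tp i := fun i => by positivity
  have hmesh : ∀ i, tp (i + 1) - tp i = T / n := by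
    intro i; simp only [htp]; push_cast; ring
  have hTn : T / n ≤ 1 / m := by
    rw [div_le_div_iff₀ hnpos hmpos]; linarith
  refine ⟨n, tp, hn1, htp0, htpn, fun i _ => htplt i, ?_⟩
  -- the big frozen-minus-η function
  set f : ℝ → ℝ → Ω → ℝ := fun t s ω =>
      (∑ i ∈ Finset.range n,
        Set.indicator (Set.Ico (tp i) (tp (i + 1))) (fun _ => η (tp i) s ω) t) - η t s ω
    with hf
  have hfmeas : Measurable (fun q : ℝ × ℝ × Ω => f q.1 q.2.1 q.2.2) := by
    apply Measurable.sub
    · apply Finset.measurable_sum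
      intro i _
      simp only [Set.indicator_apply, Set.mem_Ico]
      apply Measurable.ite
      · exact (measurableSet_le measurable_const measurable_fst).inter
          (measurableSet_lt measurable_fst measurable_const)
      · exact hmeas.comp (by fun_prop : Measurable fun q : ℝ × ℝ × Ω => ((tp i, q.2) : ℝ × ℝ × Ω))
      · exact measurable_const
    · exact hmeas
  -- joint measurability of the inner double integrand (as function on (Ω × ℝ) × ℝ)
  have hψ : Measurable (fun q : (Ω × ℝ) × ℝ =>
      (Set.Icc q.1.2 T).indicator (fun s => ENNReal.ofReal ((f q.1.2 s q.1.1) ^ 2)) q.2) := by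
    simp only [Set.indicator_apply, Set.mem_Icc]
    apply Measurable.ite
    · exact (measurableSet_le (measurable_fst.snd) measurable_snd).inter
        (measurableSet_le measurable_snd measurable_const)
    · apply ENNReal.measurable_ofReal.comp
      apply Measurable.pow_const
      exact hfmeas.comp (by fun_prop :
        Measurable fun q : (Ω × ℝ) × ℝ => ((q.1.2, q.2, q.1.1) : ℝ × ℝ × Ω))
    · exact measurable_const
  -- the function g ω t = inner integral to the power p/2
  set g : Ω → ℝ → ENNReal := fun ω t =>
      (∫⁻ s in Set.Icc t T, ENNReal.ofReal ((f t s ω) ^ 2)) ^ (p / 2) with hg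
  have hgmeas : Measurable (Function.uncurry g) := by
    have h1 : Measurable (fun q : Ω × ℝ =>
        ∫⁻ s, (Set.Icc q.2 T).indicator (fun s => ENNReal.ofReal ((f q.2 s q.1) ^ 2)) s) :=
      Measurable.lintegral_prod_right' hψ
    have h2 : Function.uncurry g = fun q : Ω × ℝ =>
        (∫⁻ s, (Set.Icc q.2 T).indicator (fun s => ENNReal.ofReal ((f q.2 s q.1) ^ 2)) s) ^ (p / 2) := by
      funext q
      simp only [Function.uncurry, hg]
      rw [lintegral_indicator measurableSet_Icc]
    rw [h2]
    exact (ENNReal.continuous_rpow_const.measurable).comp h1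
  -- swap the order of integration
  have hswap : ∫⁻ ω, (∫⁻ t in Set.Icc (0:ℝ) T, g ω t) ∂μ
      = ∫⁻ t in Set.Icc (0:ℝ) T, (∫⁻ ω, g ω t ∂μ) := by
    exact lintegral_lintegral_swap hgmeas.aemeasurable
  have key : ∫⁻ ω, (∫⁻ t in Set.Icc (0:ℝ) T, g ω t) ∂μ < ε := by
    rw [hswap]
    -- restrict to Ico
    have hIccIco : ∫⁻ t in Set.Icc (0:ℝ) T, (∫⁻ ω, g ω t ∂μ)
        = ∫⁻ t in Set.Ico (0:ℝ) T, (∫⁻ ω, g ω t ∂μ) :=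
      setLIntegral_congr Ico_ae_eq_Icc.symm
    rw [hIccIco]
    -- pointwise bound on Ico
    have hbound : ∀ t ∈ Set.Ico (0:ℝ) T, (∫⁻ ω, g ω t ∂μ) ≤ S m := by
      intro t ht
      obtain ⟨ht0, htT⟩ := ht
      set i : ℕ := ⌊t * n / T⌋₊ with hi
      have hge : (i : ℝ) ≤ t * n / T := Nat.floor_le (by positivity)
      have hlt : t * n / T < i + 1 := Nat.lt_floor_add_one _
      have h1 : (i : ℝ) * T ≤ t * n := by
        rw [← le_div_iff₀ hT]
        calc (i : ℝ) ≤ t * n / T := hge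
        _ = t * n / T := rfl
      have h2 : t * n < ((i : ℝ) + 1) * T := by
        rw [← div_lt_iff₀ hT] at *
        exact hlt
      have hile : tp i ≤ t := by
        rw [htp]; rw [div_le_iff₀ hnpos]; linarith
      have hilt : t < tp (i + 1) := by
        rw [htp]; rw [lt_div_iff₀ hnpos]; push_cast; linarith
      have hiln : i < n := by
        have : (i : ℝ) * T < n * T := by nlinarith
        have : (i : ℝ) < n := by nlinarith
        exact_mod_cast this
      -- the sum collapses
      have hsum : ∀ s ω, (∑ j ∈ Finset.range n,
          Set.indicator (Set.Ico (tp j) (tp (j + 1))) (fun _ => η (tp j) s ω) t)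
          = η (tp i) s ω := by
        intro s ω
        rw [Finset.sum_eq_single_of_mem i (Finset.mem_range.mpr hiln)]
        · exact Set.indicator_of_mem (Set.mem_Ico.mpr ⟨hile, hilt⟩) _
        · intro j _ hj
          apply Set.indicator_of_notMem
          rw [Set.mem_Ico]
          rintro ⟨ha, hb⟩
          rcases lt_or_gt_of_ne hj with h | h
          · exact absurd (lt_of_lt_of_le hb (htpmono.monotone h)) (not_lt.mpr hile)
          · exact absurd (lt_of_lt_of_le hilt (htpmono.monotone h)) (not_lt.mpr ha)
      have hgt : (∫⁻ ω, g ω t ∂μ)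
          = ∫⁻ ω, (∫⁻ s in Set.Icc (max t (tp i)) T,
              ENNReal.ofReal ((η (tp i) s ω - η t s ω) ^ 2)) ^ (p / 2) ∂μ := by
        have hmax : max t (tp i) = t := max_eq_left hile
        rw [hmax]
        refine lintegral_congr fun ω => ?_
        have hinner : (∫⁻ s in Set.Icc t T, ENNReal.ofReal ((f t s ω) ^ 2))
            = ∫⁻ s in Set.Icc t T, ENNReal.ofReal ((η (tp i) s ω - η t s ω) ^ 2) := by
          refine lintegral_congr fun s => ?_
          show ENNReal.ofReal (((∑ j ∈ Finset.range n,
              Set.indicator (Set.Ico (tp j) (tp (j + 1))) (fun _ => η (tp j) s ω) t)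
                - η t s ω) ^ 2) = _
          rw [hsum s ω]
        show (∫⁻ s in Set.Icc t T, ENNReal.ofReal ((f t s ω) ^ 2)) ^ (p / 2) = _
        rw [hinner]
      rw [hgt]
      -- now bound by the sup
      have htIcc : t ∈ Set.Icc (0:ℝ) T := ⟨ht0, le_of_lt htT⟩
      have htiIcc : tp i ∈ Set.Icc (0:ℝ) T := ⟨htpnonneg i, le_trans hile (le_of_lt htT)⟩
      have hdist : |tp i - t| ≤ 1 / (m : ℝ) := by
        rw [abs_le]
        constructor
        · have : t - tp i < T / n := by
            have := hmesh i; linarith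
          have hTn' : T / n ≤ 1 / m := hTn
          linarith
        · have : tp i - t ≤ 0 := by linarith
          have : (0:ℝ) ≤ 1 / m := by positivity
          linarith
      rw [hS]
      apply le_iSup_of_le t
      apply le_iSup_of_le htIcc
      apply le_iSup_of_le (tp i)
      apply le_iSup_of_le htiIcc
      exact le_iSup_of_le hdist le_rfl
    calc ∫⁻ t in Set.Ico (0:ℝ) T, (∫⁻ ω, g ω t ∂μ)
        ≤ ∫⁻ _ in Set.Ico (0:ℝ) T, S m := setLIntegral_mono' measurableSet_Ico hbound
      _ = S m * volume (Set.Ico (0:ℝ) T) := by rw [setLIntegral_const]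
      _ = S m * ENNReal.ofReal T := by rw [Real.volume_Ico]; norm_num
      _ ≤ S m * (ENNReal.ofReal T + 1) := by
          exact mul_le_mul_right (le_add_of_nonneg_right zero_le) _
      _ < δ * (ENNReal.ofReal T + 1) := by
          rw [mul_comm (S m), mul_comm δ]; exact ENNReal.mul_lt_mul_right hT0 hTtop hmδ
      _ = ε := by
          rw [hδdef, ENNReal.div_mul_cancel hT0 hTtop]
  exact key
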